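/- arXiv:math/0609379 — 2 statements merged into one kernel-verified Lean document; each statement's English description precedes it below -/
import Mathlib

section
/- Let X be a finite simplicial complex equipped with a piecewise flat metric, let x ∈ X, and let r be a real number with 2r < sys(X,x). Then the inclusion B(x,r) ⊆ X induces the zero homomorphism of fundamental groups; in particular, every loop contained in B(x,r) is null-homotopic in X. -/
open Set MeasureTheory Metric
open scoped ENNReal

noncomputable section

/-! ### Finite simplicial complexes and their geometric realizations -/

/-- A finite abstract simplicial complex, with vertex set `Fin n`. -/
structure FinComplex where
  /-- number of vertices -/
  n : ℕ
  /-- the faces (simplices) of the complex -/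
  faces : Finset (Finset (Fin n))
  not_empty_mem : ∅ ∉ faces
  down_closed : ∀ s ∈ faces, ∀ t ⊆ s, t.Nonempty → t ∈ faces

/-- `K.DimLE d` means that the simplicial complex `K` has dimension at most `d`. -/
def FinComplex.DimLE (K : FinComplex) (d : ℕ) : Prop :=
  ∀ s ∈ K.faces, s.card ≤ d + 1

/-- The geometric realization of a finite simplicial complex, as the set of barycentric
coordinate functions supported on a face. -/
def FinComplex.space (K : FinComplex) : Type :=
  {w : Fin K.n → ℝ // (∀ i, 0 ≤ w i) ∧ (∑ i, w i) = 1 ∧ ∃ s ∈ K.faces, ∀ i ∉ s, w i = 0}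

/-- The canonical (weak = metric, since `K` is finite) topology on the geometric
realization, induced from the product topology on `Fin K.n → ℝ`. -/
def FinComplex.topology (K : FinComplex) : TopologicalSpace K.space :=
  instTopologicalSpaceSubtype

/-- The closed geometric simplex of the realization corresponding to a face `s`. -/
def FinComplex.cell (K : FinComplex) (s : Finset (Fin K.n)) : Set K.space :=
  {w | ∀ i ∉ s, w.1 i = 0}

/-! ### Lengths of paths, piecewise flat metrics -/

/-- The length of a path in a metric space: its total variation, in `ℝ≥0∞`. -/
def pathELength {X : Type*} [PseudoEMetricSpace X] {x y : X} (γ : Path x y) : ℝ≥0∞ :=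
  eVariationOn γ Set.univ

/-- A metric is a length (intrinsic) metric if the distance between two points is the
infimum of the lengths of paths joining them. -/
def IsLengthMetric (X : Type*) [MetricSpace X] : Prop :=
  ∀ x y : X, edist x y = ⨅ γ : Path x y, pathELength γ

/-- A subset `A` of a metric space is a flat `k`-simplex if it is isometric to the convex hull
of `k` affinely independent points of a Euclidean space. -/
def IsFlatCell {X : Type*} [MetricSpace X] (A : Set X) (N k : ℕ) : Prop :=
  ∃ p : Fin k → EuclideanSpace ℝ (Fin N), AffineIndependent ℝ p ∧
    Nonempty (A ≃ᵢ (convexHull ℝ (Set.range p) : Set (EuclideanSpace ℝ (Fin N))))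

/-- A metric space structure on the geometric realization of a finite simplicial complex `K`
is a piecewise flat metric if it induces the canonical topology, is a length metric, and
each closed simplex is isometric to an affine Euclidean simplex. -/
structure IsPiecewiseFlat (K : FinComplex) [m : MetricSpace K.space] : Prop where
  compatible : m.toUniformSpace.toTopologicalSpace = K.topology
  length_metric : IsLengthMetric K.space
  flat : ∀ s ∈ K.faces, IsFlatCell (K.cell s) K.n s.card

/-! ### Systolic quantities -/

/-- The `d`-dimensional Hausdorff measure of a subset of a metric space. -/
def hmeas {X : Type*} [MetricSpace X] (d : ℝ) (s : Set X) : ℝ≥0∞ :=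
  @MeasureTheory.Measure.hausdorffMeasure X _ (borel X) (@BorelSpace.mk X _ (borel X) rfl) d s

/-- The area of a metric space: its `2`-dimensional Hausdorff measure. -/
def eArea (X : Type*) [MetricSpace X] : ℝ≥0∞ := hmeas 2 (Set.univ : Set X)

/-- The area, as a real number. -/
def areaR (X : Type*) [MetricSpace X] : ℝ := (eArea X).toReal

/-- The pointed systole at `x` : the least (infimal) length of a loop based at `x` which is
not null-homotopic. -/
def psystole (X : Type*) [MetricSpace X] (x : X) : ℝ≥0∞ :=
  ⨅ (γ : Path x x) (_ : ¬ γ.Homotopic (Path.refl x)), pathELength γ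

/-- The systole: the least (infimal) length of a noncontractible loop. -/
def systole (X : Type*) [MetricSpace X] : ℝ≥0∞ :=
  ⨅ x : X, psystole X x

/-- The systole, as a real number. -/
def sysR (X : Type*) [MetricSpace X] : ℝ := (systole X).toReal

/-- The pointed systole, as a real number. -/
def psysR (X : Type*) [MetricSpace X] (x : X) : ℝ := (psystole X x).toReal

/-- The systolic area `area/sys²` of a piecewise flat metric on (the realization of) a
finite simplicial complex, in `ℝ≥0∞`. -/
def complexSysArea (K : FinComplex) [MetricSpace K.space] : ℝ≥0∞ :=
  eArea K.space / (systole K.space) ^ 2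

/-! ### Group-theoretic notions -/

/-- A group is finitely presentable if it is isomorphic to the quotient of a finitely
generated free group by the normal closure of finitely many relators. -/
def IsFinitelyPresentable (G : Type*) [Group G] : Prop :=
  ∃ (k : ℕ) (rels : Finset (FreeGroup (Fin k))),
    Nonempty (G ≃* PresentedGroup (rels : Set (FreeGroup (Fin k))))

/-- A group is unfree if it is not isomorphic to any free group. -/
def IsUnfree (G : Type*) [Group G] : Prop :=
  ∀ S : Type, ¬ Nonempty (G ≃* FreeGroup S)

/-- A group has zero Grushko free index if it does not split as a free product `ℤ * H`. -/
def ZeroGrushkoIndex (G : Type*) [Group G] : Prop :=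
  ∀ (H : Type) [Group H], ¬ Nonempty (G ≃* Monoid.Coprod (Multiplicative ℤ) H)

/-- `GrushkoDecomp G p H` means `G ≅ F_p * H` with `F_p` free of rank `p` and `H` of zero
Grushko free index; by Grushko's theorem every finitely generated group has such a
decomposition, `p` being its Grushko free index and `H` its unfree factor. -/
def GrushkoDecomp (G : Type*) [Group G] (p : ℕ) (H : Type) [Group H] : Prop :=
  ZeroGrushkoIndex H ∧ Nonempty (G ≃* Monoid.Coprod (FreeGroup (Fin p)) H)

/-- `H` is (a representative of) the unfree factor of `G`. -/
def IsUnfreeFactor (H : Type) [Group H] (G : Type*) [Group G] : Prop :=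
  ∃ p : ℕ, GrushkoDecomp G p H

/-- `RepresentedBy G K` : the (path-connected, piecewise flat) finite `2`-complex `K` has
fundamental group isomorphic to `G`. -/
def RepresentedBy (G : Type*) [Group G] (K : FinComplex) [MetricSpace K.space] : Prop :=
  IsPiecewiseFlat K ∧ K.DimLE 2 ∧ PathConnectedSpace K.space ∧
    ∃ x : K.space, Nonempty (G ≃* FundamentalGroup K.space x)

/-- The systolic area `σ(G)` of a group `G`: the infimum of `area/sys²` over all piecewise
flat metrics on finite `2`-complexes with fundamental group isomorphic to `G`
(the reciprocal of the systolic ratio `SR(G)`). -/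
def groupSysArea (G : Type*) [Group G] : ℝ≥0∞ :=
  ⨅ (K : FinComplex) (m : MetricSpace K.space) (_ : @RepresentedBy G _ K m),
    @complexSysArea K m

end

noncomputable section

/-- The fundamental group of (the geometric realization of) a finite simplicial complex,
with respect to its canonical topology. -/
def FinComplex.pi1 (K : FinComplex) (x : K.space) : Type :=
  @FundamentalGroup K.space K.topology x

noncomputable instance (K : FinComplex) (x : K.space) : Group (K.pi1 x) := by
  letI := K.topology
  exact (inferInstance : Group (FundamentalGroup K.space x))

end

open Set Filter Topology Metric
open scoped unitInterval ENNReal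

/-!
Join every point `γ t` of the loop to `x` by a "spoke" of length less than `r + ε`. For `s` close
to `t`, the piece of `γ` between `γ s` and `γ t` lies in a contractible open star of the complex,
so it is homotopic to a connecting path of length less than `ε`; spoke, connector and spoke back
form a loop at `x` shorter than `2r + 3ε < sys(X, x)`, hence null-homotopic. So the class of
"spoke, then `γ` from `s` to `t`" agrees with that of the spoke at `t` for nearby `s`, `t`, and
connectedness of `[0, 1]` carries this from `s = 0` to `t = 1`, which makes `γ` null-homotopic.
-/

namespace Path

variable {X : Type*} [TopologicalSpace X] {a b : X}

open Homotopic.Quotient in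
theorem homotopic_of_trans_symm_homotopic_refl {p q : Path a b}
    (h : (p.trans q.symm).Homotopic (Path.refl a)) : p.Homotopic q := by
  rw [← Homotopic.Quotient.eq] at h ⊢
  rw [mk_trans, mk_symm, mk_refl] at h
  generalize Homotopic.Quotient.mk p = P, Homotopic.Quotient.mk q = Q at h ⊢
  calc P = P.trans (Q.symm.trans Q) := by simp
    _ = Q := by rw [← trans_assoc, h, refl_trans]

open Homotopic.Quotient in
theorem homotopic_refl_of_trans_homotopic_self {p : Path a b} {q : Path b b}
    (h : (p.trans q).Homotopic p) : q.Homotopic (Path.refl b) := by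
  rw [← Homotopic.Quotient.eq] at h ⊢
  rw [mk_trans] at h
  rw [mk_refl]
  generalize Homotopic.Quotient.mk p = P, Homotopic.Quotient.mk q = Q at h ⊢
  calc Q = (P.symm.trans P).trans Q := by simp
    _ = Homotopic.Quotient.refl b := by rw [trans_assoc, h, symm_trans]

theorem homotopic_of_range_subset {U : Set X} [SimplyConnectedSpace U] (p q : Path a b)
    (hp : range p ⊆ U) (hq : range q ⊆ U) : p.Homotopic q := by
  have ha : a ∈ U := hp ⟨0, p.source⟩
  have hb : b ∈ U := hp ⟨1, p.target⟩
  let lift (γ : Path a b) (hγ : range γ ⊆ U) : Path (⟨a, ha⟩ : U) ⟨b, hb⟩ :=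
    ⟨⟨fun t => ⟨γ t, hγ (mem_range_self t)⟩, by fun_prop⟩,
      Subtype.ext γ.source, Subtype.ext γ.target⟩
  exact (SimplyConnectedSpace.paths_homotopic (lift p hp) (lift q hq)).map
    ⟨Subtype.val, continuous_subtype_val⟩

end Path

section PathELength

variable {X : Type*} [PseudoEMetricSpace X] {a b c : X}

theorem edist_le_pathELength (p : Path a b) (s t : I) : edist (p s) (p t) ≤ pathELength p :=
  eVariationOn.edist_le _ (mem_univ s) (mem_univ t)

theorem range_subset_eball_of_pathELength_lt (p : Path a b) {L : ℝ≥0∞} (h : pathELength p < L) :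
    range p ⊆ Metric.eball a L := by
  rintro _ ⟨t, rfl⟩
  simpa [edist_comm] using (edist_le_pathELength p 0 t).trans_lt h

theorem pathELength_symm (p : Path a b) : pathELength p.symm = pathELength p := by
  have hanti : AntitoneOn σ univ := fun s _ t _ hst => unitInterval.symm_le_symm.mpr hst
  rw [pathELength, show ⇑p.symm = p ∘ σ from rfl, eVariationOn.comp_eq_of_antitoneOn _ _ hanti,
    image_univ, unitInterval.symm_bijective.surjective.range_eq, pathELength]

theorem eVariationOn_extend_comp_le_pathELength (p : Path a b) {φ : I → ℝ} {s : Set I}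
    (hφ : MonotoneOn φ s) : eVariationOn (p.extend ∘ φ) s ≤ pathELength p :=
  eVariationOn.comp_le_of_monotoneOn (f := p) (φ := projIcc 0 1 zero_le_one ∘ φ)
    (fun _ hu _ hv huv => monotone_projIcc _ (hφ hu hv huv)) (mapsTo_univ _ _)

theorem pathELength_trans_le (p : Path a b) (q : Path b c) :
    pathELength (p.trans q) ≤ pathELength p + pathELength q := by
  let m : I := ⟨1 / 2, by norm_num, by norm_num⟩
  have hsplit := eVariationOn.Icc_add_Icc (p.trans q) (s := univ) (a := 0) (b := m) (c := 1)
    (unitInterval.nonneg m) (unitInterval.le_one m) (mem_univ m)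
  simp only [univ_inter] at hsplit
  rw [pathELength, show (univ : Set I) = Icc 0 1 from Icc_bot_top.symm, ← hsplit]
  gcongr
  · rw [eVariationOn.eq_of_eqOn (f' := p.extend ∘ fun t : I => 2 * (t : ℝ))]
    · exact eVariationOn_extend_comp_le_pathELength p fun u _ v _ huv => by gcongr
    · intro t ht
      rw [← Path.extend_extends', Path.extend_trans_of_le_half _ _ ht.2]; rfl
  · rw [eVariationOn.eq_of_eqOn (f' := q.extend ∘ fun t : I => 2 * (t : ℝ) - 1)]
    · exact eVariationOn_extend_comp_le_pathELength q fun u _ v _ huv => by gcongr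
    · intro t ht
      rw [← Path.extend_extends', Path.extend_trans_of_half_le _ _ ht.1]; rfl

end PathELength

/-- Semilocal simple connectedness, phrased with paths rather than loops. -/
def SemilocallySimplyConnected (X : Type*) [TopologicalSpace X] : Prop :=
  ∀ w : X, ∃ U ∈ 𝓝 w, ∀ ⦃a b : X⦄ (p q : Path a b), range p ⊆ U → range q ⊆ U → p.Homotopic q

section Spokes

variable {X : Type*} [PseudoEMetricSpace X] {a b : X}

/-- Spokes are the paths from `x` of length less than `ρ`. -/
def Path.SpokesLinked (γ : Path a b) (x : X) (ρ : ℝ≥0∞) (s t : I) : Prop :=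
  ∀ (p : Path x (γ s)) (q : Path x (γ t)), pathELength p < ρ → pathELength q < ρ →
    (p.trans (γ.subpath s t)).Homotopic q

theorem Path.SpokesLinked.trans {γ : Path a b} {x : X} {ρ : ℝ≥0∞} {s t u : I}
    (hspoke : ∃ m : Path x (γ t), pathELength m < ρ) (hst : γ.SpokesLinked x ρ s t)
    (htu : γ.SpokesLinked x ρ t u) : γ.SpokesLinked x ρ s u := fun p q hp hq => by
  obtain ⟨m, hm⟩ := hspoke
  exact ((Homotopic.refl p).hcomp ⟨Homotopy.subpathTransSubpath γ s t u⟩).symm.trans <|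
    (Homotopic.trans_assoc _ _ _).symm.trans <|
      ((hst p m hp hm).hcomp (Homotopic.refl _)).trans (htu m q hm hq)

end Spokes

section LengthSpace

variable {X : Type*} [MetricSpace X] {a b : X}

theorem IsLengthMetric.exists_pathELength_lt (hlen : IsLengthMetric X) {L : ℝ≥0∞}
    (h : edist a b < L) : ∃ p : Path a b, pathELength p < L := by
  rwa [hlen a b, iInf_lt_iff] at h

theorem homotopic_refl_of_pathELength_lt_psystole {x : X} (p : Path x x)
    (h : pathELength p < psystole X x) : p.Homotopic (Path.refl x) := by
  by_contra hp
  exact (iInf₂_le p hp : psystole X x ≤ _).not_gt h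

theorem trans_homotopic_of_pathELength_lt_psystole {x : X} (p : Path x a) (c : Path a b)
    (q : Path x b) (h : pathELength p + pathELength c + pathELength q < psystole X x) :
    (p.trans c).Homotopic q := by
  refine Path.homotopic_of_trans_symm_homotopic_refl
    (homotopic_refl_of_pathELength_lt_psystole _ (lt_of_le_of_lt ?_ h))
  calc pathELength ((p.trans c).trans q.symm)
      ≤ pathELength (p.trans c) + pathELength q.symm := pathELength_trans_le _ _
    _ ≤ pathELength p + pathELength c + pathELength q := by
      rw [pathELength_symm]; gcongr; exact pathELength_trans_le _ _

theorem Path.eventually_subpath_homotopic_short_path (hlen : IsLengthMetric X)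
    (hX : SemilocallySimplyConnected X) (γ : Path a b) (s : I) {L : ℝ≥0∞} (hL : 0 < L) :
    ∀ᶠ t in 𝓝 s, ∃ c : Path (γ s) (γ t), pathELength c < L ∧ (γ.subpath s t).Homotopic c := by
  obtain ⟨U, hU, hUhom⟩ := hX (γ s)
  obtain ⟨ρ, hρ, hρU⟩ := EMetric.mem_nhds_iff.mp hU
  have harc : ∀ᶠ t in 𝓝 s, uIcc s t ⊆ γ ⁻¹' U :=
    (tendsto_const_nhds.uIcc tendsto_id).eventually
      (eventually_smallSets_subset.mpr (γ.continuous.continuousAt.preimage_mem_nhds hU))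
  have hnear : ∀ᶠ t in 𝓝 s, γ t ∈ Metric.eball (γ s) (min ρ L) :=
    γ.continuous.continuousAt.preimage_mem_nhds (Metric.eball_mem_nhds _ (lt_min hρ hL))
  filter_upwards [harc, hnear] with t harc hnear
  obtain ⟨c, hc⟩ := hlen.exists_pathELength_lt (Metric.mem_eball'.mp hnear)
  refine ⟨c, hc.trans_le (min_le_right _ _), hUhom _ _ ?_ ?_⟩
  · rw [γ.range_subpath]
    exact image_subset_iff.mpr harc
  · exact (range_subset_eball_of_pathELength_lt c (hc.trans_le (min_le_left _ _))).trans hρU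

theorem Path.eventually_spokesLinked (hlen : IsLengthMetric X) (hX : SemilocallySimplyConnected X)
    (γ : Path a b) {x : X} {ρ L : ℝ≥0∞} (hL : 0 < L) (hbudget : ρ + L + ρ ≤ psystole X x)
    (s : I) : ∀ᶠ t in 𝓝 s, γ.SpokesLinked x ρ s t ∧ γ.SpokesLinked x ρ t s := by
  have htriangle {a' b' : X} (p : Path x a') (c : Path a' b') (q : Path x b')
      (hp : pathELength p < ρ) (hc : pathELength c < L) (hq : pathELength q < ρ) :
      (p.trans c).Homotopic q :=
    trans_homotopic_of_pathELength_lt_psystole p c q <|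
      (ENNReal.add_lt_add (ENNReal.add_lt_add hp hc) hq).trans_le hbudget
  filter_upwards [γ.eventually_subpath_homotopic_short_path hlen hX s hL] with t ⟨c, hc, hsub⟩
  refine ⟨fun p q hp hq => ((Homotopic.refl p).hcomp hsub).trans (htriangle p c q hp hc hq),
    fun p q hp hq => ?_⟩
  rw [← γ.symm_subpath]
  exact ((Homotopic.refl p).hcomp hsub.symm₂).trans
    (htriangle p c.symm q hp (by rwa [pathELength_symm]) hq)

theorem Path.spokesLinked_zero_one (hlen : IsLengthMetric X) (hX : SemilocallySimplyConnected X)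
    (γ : Path a b) {x : X} {ρ L : ℝ≥0∞} (hL : 0 < L) (hbudget : ρ + L + ρ ≤ psystole X x)
    (hspoke : ∀ t, ∃ m : Path x (γ t), pathELength m < ρ) : γ.SpokesLinked x ρ 0 1 :=
  PreconnectedSpace.induction₂' _ (γ.eventually_spokesLinked hlen hX hL hbudget)
    ⟨fun _ t _ => SpokesLinked.trans (hspoke t)⟩ 0 1

theorem Path.homotopic_refl_of_range_subset_closedBall (hlen : IsLengthMetric X)
    (hX : SemilocallySimplyConnected X) {x : X} {r : ℝ}
    (hr : ENNReal.ofReal (2 * r) < psystole X x) {y : X} (γ : Path y y)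
    (hγ : range γ ⊆ closedBall x r) : γ.Homotopic (Path.refl y) := by
  have hr0 : 0 ≤ r := nonempty_closedBall.mp ⟨y, hγ ⟨0, γ.source⟩⟩
  obtain ⟨R, -, h2rR, hR⟩ := ENNReal.lt_iff_exists_real_btwn.mp hr
  replace h2rR : 2 * r < R := (ENNReal.ofReal_lt_ofReal_iff'.mp h2rR).1
  set ε := (R - 2 * r) / 3
  have hε : 0 < ε := div_pos (sub_pos.mpr h2rR) three_pos
  have hbudget :
      ENNReal.ofReal (r + ε) + ENNReal.ofReal ε + ENNReal.ofReal (r + ε) = ENNReal.ofReal R := by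
    rw [← ENNReal.ofReal_add (by positivity) hε.le, ← ENNReal.ofReal_add (by positivity)
      (by positivity)]
    congr 1
    ring
  have hspoke : ∀ z ∈ closedBall x r, ∃ p : Path x z, pathELength p < ENNReal.ofReal (r + ε) :=
    fun z hz => hlen.exists_pathELength_lt <| by
      rw [edist_dist, ENNReal.ofReal_lt_ofReal_iff (by linarith)]
      linarith [mem_closedBall'.mp hz]
  obtain ⟨τ, hτ⟩ := hspoke y (hγ ⟨0, γ.source⟩)
  have h01 := γ.spokesLinked_zero_one hlen hX (ENNReal.ofReal_pos.mpr hε) (hbudget ▸ hR.le)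
    (fun t => hspoke _ (hγ (mem_range_self t))) (τ.cast rfl γ.source) (τ.cast rfl γ.target) hτ hτ
  rw [γ.subpath_zero_one] at h01
  exact homotopic_refl_of_trans_homotopic_self (h01.pathCast rfl γ.target.symm)

end LengthSpace

namespace FinComplex

/-- The open star of the face spanned by the support of `w`. -/
def openStar (K : FinComplex) (w : K.space) : Set K.space :=
  {u | ∀ i, 0 < w.1 i → 0 < u.1 i}

theorem starConvex_image_openStar {K : FinComplex} (w : K.space) :
    StarConvex ℝ w.1 ((fun u : K.space => u.1) '' K.openStar w) := by
  rintro _ ⟨u, hu, rfl⟩ α β hα hβ hαβ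
  obtain ⟨hw0, hw1, -⟩ := w.2
  obtain ⟨hu0, hu1, s, hs, hsu⟩ := u.2
  refine ⟨⟨α • w.1 + β • u.1, fun i => ?_, ?_, s, hs, fun i hi => ?_⟩, fun i hi => ?_, rfl⟩
  · exact add_nonneg (mul_nonneg hα (hw0 i)) (mul_nonneg hβ (hu0 i))
  · simp [Finset.sum_add_distrib, ← Finset.mul_sum, hw1, hu1, hαβ]
  · have hwi : w.1 i = 0 := ((hw0 i).eq_or_lt.resolve_right fun h => (hu i h).ne' (hsu i hi)).symm
    simp [hwi, hsu i hi]
  · show 0 < α * w.1 i + β * u.1 i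
    nlinarith [lt_min hi (hu i hi), mul_le_mul_of_nonneg_left (min_le_left (w.1 i) (u.1 i)) hα,
      mul_le_mul_of_nonneg_left (min_le_right (w.1 i) (u.1 i)) hβ]

theorem isOpen_openStar {K : FinComplex} [TopologicalSpace K.space]
    (hK : IsEmbedding fun u : K.space => u.1) (w : K.space) : IsOpen (K.openStar w) := by
  simp only [openStar, ofPred_forall]
  refine isOpen_iInter_of_finite fun i => ?_
  by_cases hw : 0 < w.1 i
  · simpa [hw] using isOpen_lt continuous_const ((continuous_apply i).comp hK.continuous)
  · simp [hw]

theorem contractibleSpace_openStar {K : FinComplex} [TopologicalSpace K.space]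
    (hK : IsEmbedding fun u : K.space => u.1) (w : K.space) : ContractibleSpace (K.openStar w) :=
  (hK.homeomorphImage _).contractibleSpace_iff.mpr <|
    (starConvex_image_openStar w).contractibleSpace ⟨w.1, w, fun _ h => h, rfl⟩

theorem semilocallySimplyConnected {K : FinComplex} [TopologicalSpace K.space]
    (hK : IsEmbedding fun u : K.space => u.1) : SemilocallySimplyConnected K.space := fun w =>
  ⟨K.openStar w, (isOpen_openStar hK w).mem_nhds fun _ h => h, fun _ _ p q hp hq =>
    haveI := contractibleSpace_openStar hK w
    Path.homotopic_of_range_subset p q hp hq⟩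

end FinComplex

/-- If `2r < sys(X,x)`, then the inclusion `B(x,r) ⊆ X` induces the zero
homomorphism of fundamental groups: every loop contained in `B(x,r)` is null-homotopic
in `X`. -/
theorem ball_inclusion_pi1_trivial
    (K : FinComplex) [MetricSpace K.space] (hflat : IsPiecewiseFlat K)
    (x : K.space) (r : ℝ) (hr : ENNReal.ofReal (2 * r) < psystole K.space x) :
    ∀ y ∈ Metric.closedBall x r, ∀ γ : Path y y,
      Set.range γ ⊆ Metric.closedBall x r → γ.Homotopic (Path.refl y) := by
  have hK : IsEmbedding fun u : K.space => u.1 := ⟨⟨hflat.compatible⟩, Subtype.val_injective⟩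
  intro y _ γ hγ
  exact γ.homotopic_refl_of_range_subset_closedBall hflat.length_metric
    (FinComplex.semilocallySimplyConnected hK) hr hγ
end

section
/- Fix real numbers δ ∈ (0, 1/2) and λ > 0. Let ℓ: [0, 1/2] → ℝ be a function that is continuous outside a finite set of points, nonnegative on [0, δ], and positive on (δ, 1/2), and set a(r) = ∫₀^r ℓ(s) ds. If a(r) ≤ λ·ℓ(r)² for every r ∈ (δ, 1/2), then a(r) ≥ (r − δ)²/(4λ) for every r ∈ (δ, 1/2). -/
open Set MeasureTheory Metric
open scoped ENNReal

/-! The primitive `a(t) = ∫₀ᵗ ℓ` satisfies `a' = ℓ ≥ √(a/λ)` off finitely many points, so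
`(√a)' = ℓ/(2√a) ≥ 1/(2√λ)` on `(δ, r)`. Integrating,
`√a(r) ≥ √a(δ) + (r - δ)/(2√λ) ≥ (r - δ)/(2√λ)`, and squaring gives the bound. The exceptional
points are harmless because `√a` is continuous, so the mean value argument can be run on each
subinterval between them. -/

open Real

theorem le_of_hasDerivAt_nonneg_off_finset (T : Finset ℝ) {f f' : ℝ → ℝ} {a b : ℝ}
    (hab : a ≤ b) (hf : ContinuousOn f (Icc a b))
    (hderiv : ∀ x ∈ Ioo a b, x ∉ T → HasDerivAt f (f' x) x)
    (hf' : ∀ x ∈ Ioo a b, x ∉ T → 0 ≤ f' x) : f a ≤ f b := by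
  induction T using Finset.induction_on generalizing a b with
  | empty =>
    refine monotoneOn_of_hasDerivWithinAt_nonneg (f' := f') (convex_Icc a b) hf (fun x hx => ?_)
      (fun x hx => ?_) (left_mem_Icc.2 hab) (right_mem_Icc.2 hab) hab
    · rw [interior_Icc] at hx
      exact (hderiv x hx (Finset.notMem_empty x)).hasDerivWithinAt
    · rw [interior_Icc] at hx
      exact hf' x hx (Finset.notMem_empty x)
  | insert c T _ ih =>
    have ih' : ∀ u v, a ≤ u → v ≤ b → u ≤ v → c ∉ Ioo u v → f u ≤ f v := by
      intro u v hu hv huv hc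
      have hsub : Ioo u v ⊆ Ioo a b := Ioo_subset_Ioo hu hv
      have hnew : ∀ x ∈ Ioo u v, x ∉ T → x ∉ insert c T := fun x hx hxT => by
        simp only [Finset.mem_insert, not_or]
        exact ⟨fun h => hc (h ▸ hx), hxT⟩
      exact ih huv (hf.mono (Icc_subset_Icc hu hv))
        (fun x hx hxT => hderiv x (hsub hx) (hnew x hx hxT))
        (fun x hx hxT => hf' x (hsub hx) (hnew x hx hxT))
    by_cases hc : c ∈ Ioo a b
    · exact (ih' a c le_rfl hc.2.le hc.1.le fun h => h.2.false).trans
        (ih' c b hc.1.le le_rfl hc.2.le fun h => h.1.false)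
    · exact ih' a b le_rfl le_rfl hab hc

theorem sq_sub_div_le_of_le_mul_deriv_sq (T : Finset ℝ) {A A' : ℝ → ℝ} {a b c : ℝ}
    (hc : 0 < c) (hab : a < b) (hA : ContinuousOn A (Icc a b))
    (hderiv : ∀ x ∈ Ioo a b, x ∉ T → HasDerivAt A (A' x) x)
    (hpos : ∀ x ∈ Ioo a b, x ∉ T → 0 < A x) (hA' : ∀ x ∈ Ioo a b, x ∉ T → 0 ≤ A' x)
    (hle : ∀ x ∈ Ioo a b, x ∉ T → A x ≤ c * A' x ^ 2) :
    (b - a) ^ 2 / (4 * c) ≤ A b := by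
  have hmono := le_of_hasDerivAt_nonneg_off_finset T (f := fun x => √(A x) - x / (2 * √c))
    (f' := fun x => A' x / (2 * √(A x)) - 1 / (2 * √c)) hab.le
    ((continuous_sqrt.comp_continuousOn hA).sub (continuous_id.div_const _).continuousOn)
    (fun x hx hxT => ((hderiv x hx hxT).sqrt (hpos x hx hxT).ne').sub
      ((hasDerivAt_id x).div_const _))
    (fun x hx hxT => by
      have hAx := hpos x hx hxT
      have hsqrt : √(A x) ≤ √c * A' x := by
        rw [← sqrt_sq (hA' x hx hxT), ← sqrt_mul hc.le]
        exact sqrt_le_sqrt (hle x hx hxT)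
      rw [sub_nonneg, div_le_div_iff₀ (by positivity) (by positivity)]
      linarith)
  have hkey : (b - a) / (2 * √c) ≤ √(A b) := by
    have := sqrt_nonneg (A a)
    rw [sub_div]
    linarith
  calc (b - a) ^ 2 / (4 * c) = ((b - a) / (2 * √c)) ^ 2 := by
        rw [div_pow, mul_pow, sq_sqrt hc.le]; ring
    _ ≤ A b := (le_sqrt' (by have := sub_pos.2 hab; positivity)).1 hkey

theorem ContinuousOn.aestronglyMeasurable_of_diff_countable {α β : Type*} [TopologicalSpace α]
    [MeasurableSpace α] [OpensMeasurableSpace α] [MeasurableSingletonClass α] [TopologicalSpace β]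
    [TopologicalSpace.PseudoMetrizableSpace β] [SecondCountableTopologyEither α β]
    {μ : Measure α} [NullSingletonClass μ]
    {f : α → β} {s T : Set α} (hf : ContinuousOn f (s \ T)) (hs : MeasurableSet s)
    (hT : T.Countable) : AEStronglyMeasurable f (μ.restrict s) := by
  rw [← Measure.restrict_congr_set
    (sdiff_ae_eq_self.2 (measure_mono_null inter_subset_right (hT.measure_zero μ)))]
  exact hf.aestronglyMeasurable (hs.diff hT.measurableSet)

theorem setLIntegral_Icc_ofReal_eq_ofReal_integral {f : ℝ → ℝ} {a b : ℝ} (hab : a ≤ b)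
    (hf : IntegrableOn f (Icc a b)) (hnn : ∀ x ∈ Icc a b, 0 ≤ f x) :
    ∫⁻ x in Icc a b, ENNReal.ofReal (f x) = ENNReal.ofReal (∫ x in a..b, f x) := by
  rw [intervalIntegral.integral_of_le hab, ← integral_Icc_eq_integral_Ioc,
    ofReal_integral_eq_lintegral_ofReal hf
      ((ae_restrict_iff' measurableSet_Icc).2 (ae_of_all _ hnn))]

theorem intervalIntegral_pos_of_nonneg_of_pos_on_Ioo {f : ℝ → ℝ} {a b c : ℝ} (hac : a ≤ c)
    (hcb : c < b) (hf : IntegrableOn f (Icc a b)) (hnn : ∀ x ∈ Icc a b, 0 ≤ f x)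
    (hpos : ∀ x ∈ Ioo c b, 0 < f x) : 0 < ∫ x in a..b, f x :=
  calc 0 < ∫ x in c..b, f x :=
        intervalIntegral.intervalIntegral_pos_of_pos_on
          ((intervalIntegrable_iff_integrableOn_Icc_of_le hcb.le).2
            (hf.mono_set (Icc_subset_Icc hac le_rfl))) hpos hcb
    _ ≤ ∫ x in a..b, f x :=
        intervalIntegral.integral_mono_interval hac hcb.le le_rfl
          ((ae_restrict_iff' measurableSet_Ioc).2
            (ae_of_all _ fun x hx => hnn x (Ioc_subset_Icc_self hx)))
          ((intervalIntegrable_iff_integrableOn_Icc_of_le (hac.trans hcb.le)).2 hf)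

theorem sq_sub_div_le_integral_of_integral_le_mul_sq (T : Finset ℝ) {f : ℝ → ℝ} {a₀ a b c : ℝ}
    (hc : 0 < c) (ha₀ : a₀ ≤ a) (hab : a < b) (hf : IntegrableOn f (Icc a₀ b))
    (hcont : ContinuousOn f (Ioo a₀ b \ T)) (hnn : ∀ x ∈ Icc a₀ b, 0 ≤ f x)
    (hpos : ∀ x ∈ Ioo a b, 0 < f x)
    (hle : ∀ x ∈ Ioo a b, x ∉ T → ∫ s in a₀..x, f s ≤ c * f x ^ 2) :
    (b - a) ^ 2 / (4 * c) ≤ ∫ s in a₀..b, f s := by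
  have hsub : ∀ {x}, x ∈ Ioo a b → Icc a₀ x ⊆ Icc a₀ b := fun hx =>
    Icc_subset_Icc le_rfl hx.2.le
  refine sq_sub_div_le_of_le_mul_deriv_sq T (A := fun t => ∫ s in a₀..t, f s) hc hab ?_
    (fun x hx hxT => ?_) (fun x hx _ => ?_) (fun x hx _ => (hpos x hx).le) hle
  · have hab₀ : a₀ ≤ b := ha₀.trans hab.le
    refine (intervalIntegral.continuousOn_primitive_interval (by rwa [uIcc_of_le hab₀])).mono ?_
    rw [uIcc_of_le hab₀]
    exact Icc_subset_Icc ha₀ le_rfl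
  · have hU : IsOpen (Ioo a₀ b \ (T : Set ℝ)) := isOpen_Ioo.sdiff T.finite_toSet.isClosed
    have hx' : x ∈ Ioo a₀ b \ (T : Set ℝ) := ⟨⟨ha₀.trans_lt hx.1, hx.2⟩, hxT⟩
    exact intervalIntegral.integral_hasDerivAt_right
      ((intervalIntegrable_iff_integrableOn_Icc_of_le (ha₀.trans hx.1.le)).2
        (hf.mono_set (hsub hx)))
      (hcont.stronglyMeasurableAtFilter hU x hx') (hcont.continuousAt (hU.mem_nhds hx'))
  · exact intervalIntegral_pos_of_nonneg_of_pos_on_Ioo ha₀ hx.1 (hf.mono_set (hsub hx))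
      (fun s hs => hnn s (hsub hx hs)) fun s hs => hpos s ⟨hs.1, hs.2.trans hx.2⟩

/-- An integral–differential inequality: if
`a(r) = ∫₀ʳ ℓ(s) ds ≤ λ·ℓ(r)²` for all `r ∈ (δ, 1/2)`, where `ℓ` is continuous outside a
finite set, nonnegative on `[0, δ]` and positive on `(δ, 1/2)`, then
`a(r) ≥ (r − δ)²/(4λ)` for every `r ∈ (δ, 1/2)`. -/
theorem integral_inequality_lemma
    (δ lam : ℝ) (hδ : δ ∈ Set.Ioo 0 (1 / 2)) (hlam : 0 < lam)
    (l : ℝ → ℝ)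
    (hcont : ∃ T : Finset ℝ, ContinuousOn l (Set.Icc 0 (1 / 2) \ (T : Set ℝ)))
    (hnn : ∀ s ∈ Set.Icc 0 δ, 0 ≤ l s)
    (hpos : ∀ s ∈ Set.Ioo δ (1 / 2), 0 < l s)
    (hyp : ∀ r ∈ Set.Ioo δ (1 / 2),
      (∫⁻ s in Set.Icc 0 r, ENNReal.ofReal (l s)) ≤ ENNReal.ofReal (lam * l r ^ 2)) :
    ∀ r ∈ Set.Ioo δ (1 / 2),
      ENNReal.ofReal ((r - δ) ^ 2 / (4 * lam))
        ≤ ∫⁻ s in Set.Icc 0 r, ENNReal.ofReal (l s) := by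
  obtain ⟨T, hcont⟩ := hcont
  intro r hr
  have hr0 : 0 ≤ r := hδ.1.le.trans hr.1.le
  have hl : ∀ s ∈ Icc 0 r, 0 ≤ l s := fun s hs =>
    (le_or_gt s δ).elim (fun h => hnn s ⟨hs.1, h⟩) fun h => (hpos s ⟨h, hs.2.trans_lt hr.2⟩).le
  have hint : IntegrableOn l (Icc 0 r) := by
    have hmeas := (hcont.aestronglyMeasurable_of_diff_countable (μ := volume) measurableSet_Icc
      T.countable_toSet).mono_measure
        (Measure.restrict_mono (Icc_subset_Icc le_rfl hr.2.le) le_rfl)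
    exact (lintegral_ofReal_ne_top_iff_integrable hmeas
      ((ae_restrict_iff' measurableSet_Icc).2 (ae_of_all _ hl))).1
      ((hyp r hr).trans_lt ENNReal.ofReal_lt_top).ne
  have hlint : ∀ t ∈ Icc 0 r,
      ∫⁻ s in Icc 0 t, ENNReal.ofReal (l s) = ENNReal.ofReal (∫ s in 0..t, l s) := fun t ht =>
    setLIntegral_Icc_ofReal_eq_ofReal_integral ht.1 (hint.mono_set (Icc_subset_Icc le_rfl ht.2))
      fun s hs => hl s ⟨hs.1, hs.2.trans ht.2⟩
  rw [hlint r ⟨hr0, le_rfl⟩]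
  refine ENNReal.ofReal_le_ofReal (sq_sub_div_le_integral_of_integral_le_mul_sq T hlam hδ.1.le
    hr.1 hint (hcont.mono ?_) hl (fun x hx => hpos x ⟨hx.1, hx.2.trans hr.2⟩) fun x hx _ => ?_)
  · exact sdiff_subset_sdiff_left (Ioo_subset_Icc_self.trans (Icc_subset_Icc le_rfl hr.2.le))
  · have := hyp x ⟨hx.1, hx.2.trans hr.2⟩
    rwa [hlint x ⟨(hδ.1.trans hx.1).le, hx.2.le⟩, ENNReal.ofReal_le_ofReal_iff (by positivity)]
      at this
end
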